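/- arXiv:1505.06439 — 4 statements merged into one kernel-verified Lean document; each statement's English description precedes it below -/
import Mathlib

section
/- Let A and B be nonempty compact metric spaces and let h : A → B be a monotone map. Then for every connected subset C ⊆ B, the preimage h⁻¹(C) is a connected subset of A. -/
/-!
If `f⁻¹(s) ⊆ u ∪ v` splits along disjoint open sets, every fiber over `s`, being connected, lies in
`u` or in `v`. The points of `Y` whose fiber lies in `u` form the complement of `f(uᶜ)`, which is
open because `f` is closed; together with the analogous set for `v` this splits `s`, so `s` lies in
one of them and `f⁻¹(s)` in `u` or in `v`. A continuous map from a compact space to a Hausdorff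
space is closed.
-/

open Set Function

namespace IsClosedMap

variable {X Y : Type*} [TopologicalSpace X] [TopologicalSpace Y] {f : X → Y}

theorem isOpen_setOf_preimage_singleton_subset (hf : IsClosedMap f) {u : Set X} (hu : IsOpen u) :
    IsOpen {y | f ⁻¹' {y} ⊆ u} := by
  convert (hf _ hu.isClosed_compl).isOpen_compl using 1
  ext y
  simp only [mem_compl_iff, mem_image, not_exists, not_and]
  exact forall_congr' fun x => not_imp_not.symm

theorem isPreconnected_preimage (hf : IsClosedMap f) (hsurj : Surjective f)
    (hfib : ∀ y, IsPreconnected (f ⁻¹' {y})) {s : Set Y} (hs : IsPreconnected s) :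
    IsPreconnected (f ⁻¹' s) := by
  rw [isPreconnected_iff_subset_of_disjoint] at hs ⊢
  intro u v hu hv hsuv huv
  have fiber_subset : ∀ y ∈ s, f ⁻¹' {y} ⊆ u ∨ f ⁻¹' {y} ⊆ v := by
    intro y hy
    have hfs : f ⁻¹' {y} ⊆ f ⁻¹' s := preimage_mono (singleton_subset_iff.2 hy)
    refine isPreconnected_iff_subset_of_disjoint.1 (hfib y) u v hu hv (hfs.trans hsuv) ?_
    exact eq_empty_of_subset_empty (huv ▸ inter_subset_inter_left _ hfs)
  have hcover : s ⊆ {y | f ⁻¹' {y} ⊆ u} ∪ {y | f ⁻¹' {y} ⊆ v} := fun y hy => fiber_subset y hy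
  have hdisj : s ∩ ({y | f ⁻¹' {y} ⊆ u} ∩ {y | f ⁻¹' {y} ⊆ v}) = ∅ := by
    refine eq_empty_of_forall_notMem fun y ⟨hy, hyu, hyv⟩ => ?_
    obtain ⟨x, rfl⟩ := hsurj y
    exact huv.subset ⟨hy, hyu rfl, hyv rfl⟩
  rcases hs _ _ (hf.isOpen_setOf_preimage_singleton_subset hu)
    (hf.isOpen_setOf_preimage_singleton_subset hv) hcover hdisj with hsu | hsv
  · exact .inl fun x hx => hsu hx rfl
  · exact .inr fun x hx => hsv hx rfl

theorem isConnected_preimage (hf : IsClosedMap f) (hsurj : Surjective f)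
    (hfib : ∀ y, IsPreconnected (f ⁻¹' {y})) {s : Set Y} (hs : IsConnected s) :
    IsConnected (f ⁻¹' s) :=
  ⟨hs.nonempty.preimage hsurj, hf.isPreconnected_preimage hsurj hfib hs.isPreconnected⟩

end IsClosedMap

theorem preimage_connected_of_monotone_general
    {A B : Type*} [MetricSpace A] [CompactSpace A]
    [MetricSpace B]
    (h : A → B) (hcont : Continuous h) (hsurj : Function.Surjective h)
    (hfib : ∀ b : B, IsConnected (h ⁻¹' {b}))
    (C : Set B) (hC : IsConnected C) :
    IsConnected (h ⁻¹' C) :=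
  hcont.isClosedMap.isConnected_preimage hsurj (fun b => (hfib b).isPreconnected) hC

/-- A continuous map between compact metric spaces is *monotone* if it is surjective
and every fiber is connected. For a monotone map, the preimage of any connected set
is connected. -/
theorem preimage_connected_of_monotone
    {A B : Type*} [MetricSpace A] [CompactSpace A] [Nonempty A]
    [MetricSpace B] [CompactSpace B] [Nonempty B]
    (h : A → B) (hcont : Continuous h) (hsurj : Function.Surjective h)
    (hfib : ∀ b : B, IsConnected (h ⁻¹' {b}))
    (C : Set B) (hC : IsConnected C) :
    IsConnected (h ⁻¹' C) :=
  preimage_connected_of_monotone_general h hcont hsurj hfib C hC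
end

section
/- Let 0 < r < 1 < R and set A := (R² − 2r + 1)/(2(R² − r²)), B := r(2R² − rR² − r)/(2(R² − r²)), and define ħ : ℂ \ {0} → ℂ by ħ(z) = A·z + B/conj(z). Then: (i) ħ(z) = z/r for every z with |z| = r; (ii) ħ(z) = ((1 + R⁻²)/2)·z for every z with |z| = R; and (iii) ħ fails to be injective on the open annulus {z ∈ ℂ : r < |z| < R}, i.e. there exist z₁ ≠ z₂ with r < |z₁| < R and r < |z₂| < R and ħ(z₁) = ħ(z₂). -/
/-- The harmonic solution `hbar(z) = Az + B/conj z` of the Dirichlet problem on the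
annulus `r < |z| < R` with boundary values `z/r` and `((1 + R⁻²)/2)z` fails to be
injective (it folds the annulus). -/
theorem harmonic_dirichlet_solution_folds
    (r R : ℝ) (hr : 0 < r) (hr1 : r < 1) (hR : 1 < R)
    (A B : ℝ)
    (hA : A = (R ^ 2 - 2 * r + 1) / (2 * (R ^ 2 - r ^ 2)))
    (hB : B = r * (2 * R ^ 2 - r * R ^ 2 - r) / (2 * (R ^ 2 - r ^ 2)))
    (hbar : ℂ → ℂ)
    (hhb : ∀ z : ℂ, z ≠ 0 → hbar z = (A : ℂ) * z + (B : ℂ) / starRingEnd ℂ z) :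
    (∀ z : ℂ, ‖z‖ = r → hbar z = z / (r : ℂ)) ∧
    (∀ z : ℂ, ‖z‖ = R → hbar z = (((1 + (R : ℂ) ^ (-2 : ℤ)) / 2)) * z) ∧
    (∃ z₁ z₂ : ℂ, z₁ ≠ z₂ ∧
      r < ‖z₁‖ ∧ ‖z₁‖ < R ∧
      r < ‖z₂‖ ∧ ‖z₂‖ < R ∧
      hbar z₁ = hbar z₂) := by
  have hR0 : (0:ℝ) < R := lt_trans one_pos hR
  have hden : (0:ℝ) < R ^ 2 - r ^ 2 := by nlinarith
  have hden' : R ^ 2 - r ^ 2 ≠ 0 := ne_of_gt hden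
  have hArB : A * r ^ 2 + B = r := by
    rw [hA, hB]; field_simp; ring
  have hARB : A * R ^ 2 + B = (R ^ 2 + 1) / 2 := by
    rw [hA, hB]; field_simp; ring
  have hApos : 0 < A := by
    rw [hA]; apply div_pos <;> nlinarith
  have hBpos : 0 < B := by
    rw [hB]
    apply div_pos _ (by nlinarith)
    nlinarith [mul_pos (sub_pos.mpr hr1) (show (0:ℝ) < R^2 - 1 by nlinarith)]
  refine ⟨?_, ?_, ?_⟩
  · -- inner boundary
    intro z hz
    have hz0 : z ≠ 0 := by
      intro h; rw [h] at hz; simp at hz; exact (ne_of_gt hr) hz.symm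
    have hconj : z * starRingEnd ℂ z = (r:ℂ) ^ 2 := by
      rw [Complex.mul_conj, Complex.normSq_eq_norm_sq, hz]
      push_cast; ring
    have hc0 : starRingEnd ℂ z ≠ 0 := by simpa using hz0
    have hr0 : (r:ℂ) ≠ 0 := by exact_mod_cast ne_of_gt hr
    have key : (A:ℂ) * (r:ℂ) ^ 2 + (B:ℂ) = (r:ℂ) := by exact_mod_cast hArB
    rw [hhb z hz0]
    field_simp
    linear_combination ((A:ℂ) * (r:ℂ) - 1) * hconj + (r:ℂ) * key
  · -- outer boundary
    intro z hz
    have hz0 : z ≠ 0 := by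
      intro h; rw [h] at hz; simp at hz; exact (ne_of_gt hR0) hz.symm
    have hconj : z * starRingEnd ℂ z = (R:ℂ) ^ 2 := by
      rw [Complex.mul_conj, Complex.normSq_eq_norm_sq, hz]
      push_cast; ring
    have hc0 : starRingEnd ℂ z ≠ 0 := by simpa using hz0
    have hR0' : (R:ℂ) ≠ 0 := by exact_mod_cast ne_of_gt hR0
    have key : (A:ℂ) * (R:ℂ) ^ 2 + (B:ℂ) = ((R:ℂ) ^ 2 + 1) / 2 := by exact_mod_cast hARB
    rw [hhb z hz0]
    have h2 : ((1 + (R:ℂ) ^ (-2:ℤ)) / 2) = ((R:ℂ)^2 + 1) / (2 * (R:ℂ)^2) := by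
      rw [show ((R:ℂ)^(-2:ℤ)) = ((R:ℂ)^2)⁻¹ by rw [zpow_neg]; norm_cast]
      rw [div_eq_div_iff (two_ne_zero) (by simp [pow_ne_zero, hR0'] : (2 * (R:ℂ)^2) ≠ 0)]
      field_simp
    rw [h2]
    field_simp
    linear_combination (2 * (A:ℂ) * (R:ℂ)^2 - ((R:ℂ)^2 + 1)) * hconj + 2 * (R:ℂ)^2 * key
  · -- folding
    have hcpos : 0 < B / A := div_pos hBpos hApos
    have hc1 : r ^ 2 < B / A := by
      rw [lt_div_iff₀ hApos, hA, hB]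
      rw [mul_div_assoc', div_lt_div_iff₀ (by positivity) (by positivity)]
      nlinarith [mul_pos (mul_pos hden (sub_pos.mpr hr1)) (show (0:ℝ) < R^2 - r by nlinarith)]
    have hc2 : B / A < R ^ 2 := by
      rw [div_lt_iff₀ hApos, hA, hB]
      rw [mul_div_assoc', div_lt_div_iff₀ (by positivity) (by positivity)]
      nlinarith [mul_nonneg hden.le (sq_nonneg (R^2 - r)),
        mul_pos hden (mul_pos (mul_pos hR0 (sub_pos.mpr hr1)) (mul_pos hR0 (sub_pos.mpr hr1)))]
    clear hA hB hArB hARB hden hden'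
    set c := B / A with hc
    set x₀ := Real.sqrt c with hx₀
    have hx₀sq : x₀ ^ 2 = c := Real.sq_sqrt hcpos.le
    have hx₀pos : 0 < x₀ := Real.sqrt_pos.mpr hcpos
    have hrx₀ : r < x₀ := by nlinarith [hx₀sq]
    have hx₀R : x₀ < R := by nlinarith [hx₀sq]
    set ε := min (R - x₀) (x₀ * (x₀ - r) / r) / 2 with hε
    have hm1 : min (R - x₀) (x₀ * (x₀ - r) / r) ≤ R - x₀ := min_le_left _ _
    have hm2 : min (R - x₀) (x₀ * (x₀ - r) / r) ≤ x₀ * (x₀ - r) / r := min_le_right _ _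
    have hmpos : 0 < min (R - x₀) (x₀ * (x₀ - r) / r) :=
      lt_min (by linarith) (div_pos (mul_pos hx₀pos (by linarith)) hr)
    have hεpos : 0 < ε := by rw [hε]; linarith
    have hε1 : ε < R - x₀ := by rw [hε]; linarith
    have hε2 : ε < x₀ * (x₀ - r) / r := by rw [hε]; linarith
    set x := x₀ + ε with hx
    have hxpos : 0 < x := by positivity
    have hxne : x ≠ 0 := ne_of_gt hxpos
    set y := c / x with hy
    have hypos : 0 < y := div_pos hcpos hxpos
    have hxy : x * y = c := by rw [hy]; field_simp
    have hxR : x < R := by rw [hx]; linarith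
    have hrx : r < x := by rw [hx]; linarith
    have hx₀x : x₀ < x := by rw [hx]; linarith
    have hyx₀ : y < x₀ := by
      rw [hy, div_lt_iff₀ hxpos, ← hx₀sq, pow_two]
      exact mul_lt_mul_of_pos_left hx₀x hx₀pos
    have hyR : y < R := lt_trans hyx₀ hx₀R
    have hry : r < y := by
      rw [hy, lt_div_iff₀ hxpos]
      have h3 : ε * r < x₀ * (x₀ - r) := by
        have h4 := mul_lt_mul_of_pos_right hε2 hr
        rwa [div_mul_cancel₀ _ (ne_of_gt hr)] at h4
      have h5 : r * x = r * x₀ + ε * r := by rw [hx]; ring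
      have h6 : x₀ * (x₀ - r) = x₀ ^ 2 - r * x₀ := by ring
      rw [← hx₀sq]
      linarith
    have hyxlt : y < x := lt_trans hyx₀ hx₀x
    have hBxy : B = A * (x * y) := by
      rw [hxy, hc]; field_simp
    have hfeq : A * x + B / x = A * y + B / y := by
      have h1 : B / x = A * y := by
        rw [hBxy]; field_simp
      have h2 : B / y = A * x := by
        rw [hBxy]; field_simp
      rw [h1, h2]; ring
    refine ⟨(x:ℂ), (y:ℂ), ?_, ?_, ?_, ?_, ?_, ?_⟩
    · intro h
      have : x = y := by exact_mod_cast h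
      linarith
    · rw [Complex.norm_real, Real.norm_eq_abs, abs_of_pos hxpos]; exact hrx
    · rw [Complex.norm_real, Real.norm_eq_abs, abs_of_pos hxpos]; exact hxR
    · rw [Complex.norm_real, Real.norm_eq_abs, abs_of_pos hypos]; exact hry
    · rw [Complex.norm_real, Real.norm_eq_abs, abs_of_pos hypos]; exact hyR
    · have hx0' : (x:ℂ) ≠ 0 := by exact_mod_cast hxne
      have hy0' : (y:ℂ) ≠ 0 := by exact_mod_cast ne_of_gt hypos
      rw [hhb _ hx0', hhb _ hy0', Complex.conj_ofReal, Complex.conj_ofReal]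
      have h4 : ((A * x + B / x : ℝ) : ℂ) = ((A * y + B / y : ℝ) : ℂ) := by
        exact_mod_cast hfeq
      push_cast at h4
      exact h4
end

section
/- Let 0 < r < 1 < R and define h on the closed annulus A = {z ∈ ℂ : r ≤ |z| ≤ R} by h(z) = z/|z| for r ≤ |z| ≤ 1 and h(z) = (z + 1/conj(z))/2 for 1 ≤ |z| ≤ R. Then h is a well-defined continuous map, h maps A onto the closed annulus B = {w ∈ ℂ : 1 ≤ |w| ≤ (R + R⁻¹)/2}, h is monotone (the preimage of every point of B is a connected subset of A), and h is injective on the open sub-annulus {z : 1 < |z| < R}. -/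
open Set

/-! ### Auxiliary lemmas -/

lemma upper_eq (z : ℂ) (hz : z ≠ 0) :
    (z + 1 / starRingEnd ℂ z) / 2 = z * (((1 + ((‖z‖)^2)⁻¹) / 2 : ℝ) : ℂ) := by
  have hc : starRingEnd ℂ z ≠ 0 := by simpa using hz
  have hmc : z * starRingEnd ℂ z = (((‖z‖)^2 : ℝ) : ℂ) := by
    rw [Complex.mul_conj]; norm_cast; exact (Complex.sq_norm z).symm
  have ha : ((‖z‖)^2 : ℝ) ≠ 0 := by
    simpa using (pow_ne_zero 2 (norm_ne_zero_iff.mpr hz))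
  have ha' : (((‖z‖)^2 : ℝ) : ℂ) ≠ 0 := by exact_mod_cast ha
  have h1 : 1 / starRingEnd ℂ z = z / (((‖z‖)^2 : ℝ) : ℂ) := by
    rw [div_eq_div_iff hc ha']; rw [← hmc]; ring
  rw [h1]
  push_cast
  field_simp

lemma abs_upper (z : ℂ) (hz : 1 ≤ ‖z‖) :
    ‖(z + 1 / starRingEnd ℂ z) / 2‖
      = (‖z‖ + (‖z‖)⁻¹) / 2 := by
  have h0 : (0:ℝ) < ‖z‖ := lt_of_lt_of_le one_pos hz
  have hz0 : z ≠ 0 := by simpa using norm_ne_zero_iff.mp (ne_of_gt h0)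
  rw [upper_eq z hz0, norm_mul, Complex.norm_real, Real.norm_eq_abs]
  have hpos : (0:ℝ) ≤ (1 + ((‖z‖)^2)⁻¹) / 2 := by positivity
  rw [abs_of_nonneg hpos]
  field_simp

lemma phi_lt {s t : ℝ} (hs : 1 ≤ s) (hst : s < t) :
    (s + s⁻¹) / 2 < (t + t⁻¹) / 2 := by
  have hs0 : 0 < s := lt_of_lt_of_le one_pos hs
  have ht0 : 0 < t := hs0.trans hst
  have h1 : s * s⁻¹ = 1 := mul_inv_cancel₀ (ne_of_gt hs0)
  have h2 : t * t⁻¹ = 1 := mul_inv_cancel₀ (ne_of_gt ht0)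
  have h3 : 1 < s * t := by nlinarith
  nlinarith [mul_pos (inv_pos.mpr hs0) (inv_pos.mpr ht0)]

lemma phi_le {s t : ℝ} (hs : 1 ≤ s) (hst : s ≤ t) :
    (s + s⁻¹) / 2 ≤ (t + t⁻¹) / 2 := by
  rcases eq_or_lt_of_le hst with rfl | h
  · exact le_refl _
  · exact le_of_lt (phi_lt hs h)

lemma phi_inj {s t : ℝ} (hs : 1 ≤ s) (ht : 1 ≤ t)
    (h : (s + s⁻¹) / 2 = (t + t⁻¹) / 2) : s = t := by
  rcases lt_trichotomy s t with h1 | h1 | h1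
  · exact absurd h (ne_of_lt (phi_lt hs h1))
  · exact h1
  · exact absurd h.symm (ne_of_lt (phi_lt ht h1))

lemma phi_one_le {s : ℝ} (hs : 1 ≤ s) : 1 ≤ (s + s⁻¹) / 2 := by
  have := phi_le (le_refl 1) hs
  simpa using this

lemma phi_inv {a : ℝ} (ha : 1 ≤ a) :
    1 ≤ a + Real.sqrt (a^2 - 1) ∧
    ((a + Real.sqrt (a^2 - 1)) + (a + Real.sqrt (a^2 - 1))⁻¹) / 2 = a := by
  set u := Real.sqrt (a^2 - 1) with hu
  have hu0 : 0 ≤ u := Real.sqrt_nonneg _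
  have hu2 : u^2 = a^2 - 1 := Real.sq_sqrt (by nlinarith)
  have hs1 : 1 ≤ a + u := by linarith
  have hs0 : a + u ≠ 0 := by positivity
  refine ⟨hs1, ?_⟩
  have key : (a + u) * (2*a - (a+u)) = 1 := by nlinarith
  have h4 : 2*a - (a+u) = (a+u)⁻¹ := by
    field_simp
    linarith [key]
  rw [← h4]
  ring

/-- The energy-minimal monotone deformation between the annuli
`{r ≤ |z| ≤ R}` and `{1 ≤ |w| ≤ (R + R⁻¹)/2}`: it squeezes `{r ≤ |z| ≤ 1}` onto the
unit circle and acts as the critical harmonic Nitsche map on `{1 ≤ |z| ≤ R}`.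
It is well defined, continuous, surjective, monotone, and injective on
`{1 < |z| < R}`. -/
theorem nitsche_map_is_monotone
    (r R : ℝ) (hr : 0 < r) (hr1 : r < 1) (hR : 1 < R)
    (h : ℂ → ℂ)
    (h₁ : ∀ z : ℂ, r ≤ ‖z‖ → ‖z‖ ≤ 1 →
      h z = z / (‖z‖ : ℂ))
    (h₂ : ∀ z : ℂ, 1 ≤ ‖z‖ → ‖z‖ ≤ R →
      h z = (z + 1 / starRingEnd ℂ z) / 2) :
    ContinuousOn h {z : ℂ | r ≤ ‖z‖ ∧ ‖z‖ ≤ R} ∧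
    h '' {z : ℂ | r ≤ ‖z‖ ∧ ‖z‖ ≤ R}
      = {w : ℂ | 1 ≤ ‖w‖ ∧ ‖w‖ ≤ (R + R⁻¹) / 2} ∧
    (∀ w : ℂ, 1 ≤ ‖w‖ → ‖w‖ ≤ (R + R⁻¹) / 2 →
      IsConnected {z : ℂ | (r ≤ ‖z‖ ∧ ‖z‖ ≤ R) ∧ h z = w}) ∧
    InjOn h {z : ℂ | 1 < ‖z‖ ∧ ‖z‖ < R} := by
  have hR0 : (0:ℝ) < R := lt_trans one_pos hR
  have hRtarget : (1:ℝ) ≤ (R + R⁻¹) / 2 := phi_one_le (le_of_lt hR)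
  -- abs of h on upper annulus
  have habs₂ : ∀ z : ℂ, 1 ≤ ‖z‖ → ‖z‖ ≤ R →
      ‖h z‖ = (‖z‖ + (‖z‖)⁻¹) / 2 := by
    intro z hz1 hzR
    rw [h₂ z hz1 hzR]
    exact abs_upper z hz1
  -- abs of h on lower annulus
  have habs₁ : ∀ z : ℂ, r ≤ ‖z‖ → ‖z‖ ≤ 1 →
      ‖h z‖ = 1 := by
    intro z hz1 hz2
    have hz0 : ‖z‖ ≠ 0 := ne_of_gt (lt_of_lt_of_le hr hz1)
    rw [h₁ z hz1 hz2, norm_div, Complex.norm_real, Real.norm_eq_abs,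
      abs_of_nonneg (norm_nonneg z), div_self hz0]
  refine ⟨?_, ?_, ?_, ?_⟩
  · -- continuity
    set g : ℂ → ℂ := fun z =>
      (((max 1 (‖z‖) + (max 1 (‖z‖))⁻¹) / 2 : ℝ) : ℂ) * z
        / (‖z‖ : ℂ) with hg
    have hgc : ContinuousOn g {z : ℂ | r ≤ ‖z‖ ∧ ‖z‖ ≤ R} := by
      have hm : Continuous fun z : ℂ => max 1 (‖z‖) :=
        continuous_const.max continuous_norm
      have hm0 : ∀ z : ℂ, max 1 (‖z‖) ≠ 0 := fun z =>
        ne_of_gt (lt_of_lt_of_le one_pos (le_max_left _ _))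
      have hc : Continuous fun z : ℂ =>
          (((max 1 (‖z‖) + (max 1 (‖z‖))⁻¹) / 2 : ℝ) : ℂ) := by
        apply Continuous.comp Complex.continuous_ofReal
        exact (hm.add (hm.inv₀ hm0)).div_const 2
      apply ContinuousOn.div
      · exact ((hc.mul continuous_id).continuousOn)
      · exact (Complex.continuous_ofReal.comp continuous_norm).continuousOn
      · intro z hz
        have : ‖z‖ ≠ 0 := ne_of_gt (lt_of_lt_of_le hr hz.1)
        simpa using this
    apply ContinuousOn.congr hgc
    intro z hz
    obtain ⟨hzr, hzR⟩ := hz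
    have hz0 : z ≠ 0 := by
      intro hz0; rw [hz0] at hzr; simp at hzr; linarith
    have ha0 : ‖z‖ ≠ 0 := norm_ne_zero_iff.mpr hz0
    rcases le_total (‖z‖) 1 with hle | hge
    · rw [h₁ z hzr hle, hg]
      simp only [max_eq_left hle]
      norm_num
    · rw [h₂ z hge hzR, upper_eq z hz0, hg]
      simp only [max_eq_right hge]
      have hreal : (‖z‖ + (‖z‖)⁻¹) / 2 / (‖z‖)
          = (1 + ((‖z‖)^2)⁻¹) / 2 := by
        field_simp
      rw [← hreal]
      push_cast
      field_simp
  · -- image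
    ext w
    simp only [mem_image, mem_setOf_eq]
    constructor
    · rintro ⟨z, ⟨hzr, hzR⟩, rfl⟩
      rcases le_total (‖z‖) 1 with hle | hge
      · rw [habs₁ z hzr hle]
        exact ⟨le_refl 1, hRtarget⟩
      · rw [habs₂ z hge hzR]
        exact ⟨phi_one_le hge, phi_le hge hzR⟩
    · rintro ⟨hw1, hw2⟩
      set a := ‖w‖ with ha
      obtain ⟨hs1, hsphi⟩ := phi_inv hw1
      set s := a + Real.sqrt (a^2 - 1) with hs
      have hsR : s ≤ R := by
        by_contra hcon
        push_neg at hcon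
        have := phi_lt (le_of_lt hR) hcon
        rw [hsphi] at this
        linarith
      have ha0 : a ≠ 0 := ne_of_gt (lt_of_lt_of_le one_pos hw1)
      have hs0 : s ≠ 0 := ne_of_gt (lt_of_lt_of_le one_pos hs1)
      have hapos : (0:ℝ) < a := lt_of_lt_of_le one_pos hw1
      have hspos : (0:ℝ) < s := lt_of_lt_of_le one_pos hs1
      have habsz : ‖((s / a : ℝ) : ℂ) * w‖ = s := by
        rw [norm_mul, Complex.norm_real, Real.norm_eq_abs, abs_of_pos (by positivity), ← ha]
        field_simp
      refine ⟨((s / a : ℝ) : ℂ) * w, ⟨by rw [habsz]; linarith, by rw [habsz]; exact hsR⟩, ?_⟩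
      have hz0 : ((s / a : ℝ) : ℂ) * w ≠ 0 := by
        intro hcon
        rw [hcon] at habsz
        simp at habsz
        exact hs0 habsz.symm
      rw [h₂ _ (by rw [habsz]; exact hs1) (by rw [habsz]; exact hsR),
        upper_eq _ hz0, habsz]
      have hcoef : (s / a) * ((1 + (s^2)⁻¹) / 2) = 1 := by
        have hss : s * s⁻¹ = 1 := mul_inv_cancel₀ hs0
        have : (1 + (s^2)⁻¹) / 2 = ((s + s⁻¹)/2) / s := by
          field_simp
        rw [this, hsphi]
        field_simp
      calc ((s / a : ℝ) : ℂ) * w * (((1 + (s^2)⁻¹) / 2 : ℝ) : ℂ)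
          = (((s / a) * ((1 + (s^2)⁻¹) / 2) : ℝ) : ℂ) * w := by push_cast; ring
        _ = w := by rw [hcoef]; simp
  · -- fibers connected
    intro w hw1 hw2
    have hw0 : w ≠ 0 := by
      intro hcon; rw [hcon] at hw1; simp at hw1; linarith
    -- fact: any z in fiber with |z| < 1 impossible unless |w| = 1, etc.
    rcases eq_or_lt_of_le hw1 with heq | hlt
    · -- |w| = 1 : fiber is the segment {t • w : t ∈ [r,1]}
      have hfib : {z : ℂ | (r ≤ ‖z‖ ∧ ‖z‖ ≤ R) ∧ h z = w}
          = (fun t : ℝ => (t : ℂ) * w) '' Icc r 1 := by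
        ext z
        simp only [mem_setOf_eq, mem_image, mem_Icc]
        constructor
        · rintro ⟨⟨hzr, hzR⟩, hzw⟩
          have hle : ‖z‖ ≤ 1 := by
            by_contra hcon
            push_neg at hcon
            have := habs₂ z (le_of_lt hcon) hzR
            rw [hzw, ← heq] at this
            have := phi_lt (le_refl 1) hcon
            simp at this
            linarith
          refine ⟨‖z‖, ⟨hzr, hle⟩, ?_⟩
          have ha0 : (‖z‖ : ℂ) ≠ 0 := by
            simpa using ne_of_gt (lt_of_lt_of_le hr hzr)
          rw [← hzw, h₁ z hzr hle]
          field_simp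
        · rintro ⟨t, ⟨htr, ht1⟩, rfl⟩
          have ht0 : 0 < t := lt_of_lt_of_le hr htr
          have habsz : ‖(t : ℂ) * w‖ = t := by
            rw [norm_mul, Complex.norm_real, Real.norm_eq_abs, abs_of_pos ht0, ← heq, mul_one]
          refine ⟨⟨by rw [habsz]; exact htr, by rw [habsz]; linarith⟩, ?_⟩
          rw [h₁ _ (by rw [habsz]; exact htr) (by rw [habsz]; exact ht1), habsz]
          have : (t : ℂ) ≠ 0 := by exact_mod_cast ne_of_gt ht0
          field_simp
      rw [hfib]
      apply IsConnected.image
      · exact isConnected_Icc (by linarith)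
      · exact (Complex.continuous_ofReal.mul continuous_const).continuousOn
    · -- |w| > 1 : fiber is a single point
      set a := ‖w‖ with ha
      obtain ⟨hs1, hsphi⟩ := phi_inv hw1
      set s := a + Real.sqrt (a^2 - 1) with hs
      have hsR : s ≤ R := by
        by_contra hcon
        push_neg at hcon
        have := phi_lt (le_of_lt hR) hcon
        rw [hsphi] at this
        linarith
      have hs0 : s ≠ 0 := ne_of_gt (lt_of_lt_of_le one_pos hs1)
      have hcpos : (0:ℝ) < (1 + (s^2)⁻¹) / 2 := by positivity
      have hfib : {z : ℂ | (r ≤ ‖z‖ ∧ ‖z‖ ≤ R) ∧ h z = w}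
          = {w / (((1 + (s^2)⁻¹) / 2 : ℝ) : ℂ)} := by
        have hc0 : (((1 + (s^2)⁻¹) / 2 : ℝ) : ℂ) ≠ 0 := by
          exact_mod_cast ne_of_gt hcpos
        ext z
        simp only [mem_setOf_eq, mem_singleton_iff]
        constructor
        · rintro ⟨⟨hzr, hzR⟩, hzw⟩
          have hge : 1 ≤ ‖z‖ := by
            by_contra hcon
            push_neg at hcon
            have := habs₁ z hzr (le_of_lt hcon)
            rw [hzw] at this
            rw [ha] at hlt
            linarith
          have hzs : ‖z‖ = s := by
            apply phi_inj hge hs1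
            rw [← habs₂ z hge hzR, hzw, hsphi, ha]
          have hz0 : z ≠ 0 := by
            intro hcon; rw [hcon] at hge; simp at hge; linarith
          have := h₂ z hge hzR
          rw [upper_eq z hz0, hzs] at this
          rw [← hzw, this, mul_div_cancel_right₀ _ hc0]
        · rintro rfl
          have habsz : ‖w / (((1 + (s^2)⁻¹) / 2 : ℝ) : ℂ)‖ = s := by
            rw [norm_div, Complex.norm_real, Real.norm_eq_abs, abs_of_pos hcpos, ← ha]
            rw [eq_comm, eq_div_iff (ne_of_gt hcpos)]
            have : (1 + (s^2)⁻¹) / 2 = ((s + s⁻¹)/2) / s := by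
              field_simp
            rw [this, hsphi]
            field_simp
          have hz0 : w / (((1 + (s^2)⁻¹) / 2 : ℝ) : ℂ) ≠ 0 := by
            intro hcon
            rw [hcon] at habsz
            simp at habsz
            exact hs0 habsz.symm
          refine ⟨⟨by rw [habsz]; linarith, by rw [habsz]; exact hsR⟩, ?_⟩
          rw [h₂ _ (by rw [habsz]; exact hs1) (by rw [habsz]; exact hsR),
            upper_eq _ hz0, habsz]
          rw [div_mul_cancel₀ _ hc0]
      rw [hfib]
      exact isConnected_singleton
  · -- injectivity on open annulus
    intro z₁ hz₁ z₂ hz₂ hzz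
    simp only [mem_setOf_eq] at hz₁ hz₂
    have h1R : ‖z₁‖ ≤ R := le_of_lt hz₁.2
    have h2R : ‖z₂‖ ≤ R := le_of_lt hz₂.2
    have h11 : 1 ≤ ‖z₁‖ := le_of_lt hz₁.1
    have h21 : 1 ≤ ‖z₂‖ := le_of_lt hz₂.1
    have habs : ‖z₁‖ = ‖z₂‖ := by
      apply phi_inj h11 h21
      rw [← habs₂ z₁ h11 h1R, ← habs₂ z₂ h21 h2R, hzz]
    have hz10 : z₁ ≠ 0 := by intro hcon; rw [hcon] at h11; simp at h11; linarith
    have hz20 : z₂ ≠ 0 := by intro hcon; rw [hcon] at h21; simp at h21; linarith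
    have e1 := h₂ z₁ h11 h1R
    have e2 := h₂ z₂ h21 h2R
    rw [upper_eq z₁ hz10] at e1
    rw [upper_eq z₂ hz20] at e2
    have hc0 : (((1 + ((‖z₁‖)^2)⁻¹) / 2 : ℝ) : ℂ) ≠ 0 := by
      have : (0:ℝ) < (1 + ((‖z₁‖)^2)⁻¹) / 2 := by positivity
      exact_mod_cast ne_of_gt this
    rw [e1, e2, habs] at hzz
    exact mul_right_cancel₀ (by rw [← habs]; exact hc0) hzz
end

section
/- Let 1 < p < ∞ and let Ω ⊆ ℝ² be a nonempty bounded open set. Let u and v be real-valued functions that are continuous on closure(Ω) and p-harmonic on Ω. Then for every x ∈ closure(Ω), |u(x) − v(x)| ≤ sup{ |u(y) − v(y)| : y ∈ frontier(Ω) }. -/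
open MeasureTheory Set
open scoped RealInnerProductSpace

/-- `φ` is `p`-harmonic on the open set `Ω ⊆ ℝ²`: it is `C¹` on `Ω` and satisfies the
weak form of `div(‖∇φ‖^{p-2} ∇φ) = 0` against all compactly supported `C¹` test
functions supported in `Ω`. -/
def PHarmonicOn (p : ℝ) (Ω : Set (EuclideanSpace ℝ (Fin 2)))
    (φ : EuclideanSpace ℝ (Fin 2) → ℝ) : Prop :=
  ContDiffOn ℝ 1 φ Ω ∧
  ∀ η : EuclideanSpace ℝ (Fin 2) → ℝ, ContDiff ℝ 1 η → HasCompactSupport η →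
    tsupport η ⊆ Ω →
    ∫ x in Ω, ‖gradient φ x‖ ^ (p - 2) * ⟪gradient φ x, gradient η x⟫ = 0

noncomputable section PHarmonicAux

abbrev E2 := EuclideanSpace ℝ (Fin 2)


def Gc (t : ℝ) : ℝ := max t 0 ^ 2

lemma Gc_hasDerivAt (t : ℝ) : HasDerivAt Gc (2 * max t 0) t := by
  rcases lt_trichotomy t 0 with ht | rfl | ht
  · have h0 : Gc =ᶠ[nhds t] fun _ => (0:ℝ) := by
      filter_upwards [Iio_mem_nhds ht] with s hs
      simp [Gc, max_eq_right (le_of_lt (mem_Iio.1 hs))]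
    have h := (hasDerivAt_const t (0:ℝ)).congr_of_eventuallyEq h0
    simpa [max_eq_right ht.le] using h
  · rw [hasDerivAt_iff_isLittleO, Asymptotics.isLittleO_iff]
    intro c hc
    filter_upwards [Metric.ball_mem_nhds (0:ℝ) hc] with h hh
    have h1 : |h| < c := by simpa [Real.dist_eq] using hh
    have h2 : max h 0 ≤ |h| := max_le (le_abs_self h) (abs_nonneg h)
    have h3 : (0:ℝ) ≤ max h 0 := le_max_right _ _
    have key : ‖max h 0 ^ 2‖ ≤ c * ‖h‖ := by
      rw [Real.norm_eq_abs, Real.norm_eq_abs, abs_of_nonneg (by positivity)]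
      nlinarith [mul_le_mul h2 h2 h3 (abs_nonneg h),
        mul_le_mul_of_nonneg_right h1.le (abs_nonneg h)]
    simpa [Gc] using key
  · have h0 : Gc =ᶠ[nhds t] fun s => s ^ 2 := by
      filter_upwards [Ioi_mem_nhds ht] with s hs
      simp [Gc, max_eq_left (le_of_lt (mem_Ioi.1 hs))]
    have h := (hasDerivAt_pow 2 t).congr_of_eventuallyEq h0
    simpa [max_eq_left ht.le, mul_comm] using h

lemma Gc_eq_zero_iff {t : ℝ} : Gc t = 0 ↔ t ≤ 0 := by
  constructor
  · intro h
    have := pow_eq_zero_iff (n := 2) (by norm_num) |>.1 h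
    have h3 : (0:ℝ) ≤ max t 0 := le_max_right _ _
    nlinarith [le_max_left t 0, this]
  · intro h
    simp [Gc, max_eq_right h]

lemma Gc_contDiff : ContDiff ℝ 1 Gc := by
  rw [contDiff_one_iff_deriv]
  refine ⟨fun t => (Gc_hasDerivAt t).differentiableAt, ?_⟩
  have hd : deriv Gc = fun t => 2 * max t 0 := funext fun t => (Gc_hasDerivAt t).deriv
  rw [hd]
  exact continuous_const.mul (continuous_id.max continuous_const)

lemma rpow_h1 {p A : ℝ} (hp : 1 < p) (hA : 0 ≤ A) : A ^ (p - 2) * A = A ^ (p - 1) := by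
  rcases hA.eq_or_lt with h | h
  · rw [← h]
    rw [Real.zero_rpow (by intro h'; linarith : p - 1 ≠ 0)]
    simp
  · calc A ^ (p - 2) * A = A ^ (p - 2) * A ^ (1:ℝ) := by rw [Real.rpow_one]
      _ = A ^ (p - 2 + 1) := (Real.rpow_add h _ _).symm
      _ = A ^ (p - 1) := by ring_nf

lemma inner_expand (p : ℝ) (a b : E2) :
    ⟪(‖a‖ ^ (p - 2)) • a - (‖b‖ ^ (p - 2)) • b, a - b⟫ =
      ‖a‖ ^ (p - 2) * (‖a‖ ^ 2 - ⟪a, b⟫) + ‖b‖ ^ (p - 2) * (‖b‖ ^ 2 - ⟪a, b⟫) := by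
  simp only [inner_sub_left, inner_sub_right, real_inner_smul_left,
    real_inner_self_eq_norm_sq, real_inner_comm b a]
  ring

lemma key_lower {p : ℝ} (hp : 1 < p) (a b : E2) :
    (‖a‖ ^ (p - 1) - ‖b‖ ^ (p - 1)) * (‖a‖ - ‖b‖) ≤
      ⟪(‖a‖ ^ (p - 2)) • a - (‖b‖ ^ (p - 2)) • b, a - b⟫ := by
  rw [inner_expand]
  have hA := norm_nonneg a
  have hB := norm_nonneg b
  have ht : ⟪a, b⟫ ≤ ‖a‖ * ‖b‖ := real_inner_le_norm a b
  have hsA : ‖a‖ ^ (p - 2) * ‖a‖ = ‖a‖ ^ (p - 1) := rpow_h1 hp hA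
  have hsB : ‖b‖ ^ (p - 2) * ‖b‖ = ‖b‖ ^ (p - 1) := rpow_h1 hp hB
  have h1 : (0:ℝ) ≤ ‖a‖ ^ (p - 2) := Real.rpow_nonneg hA _
  have h2 : (0:ℝ) ≤ ‖b‖ ^ (p - 2) := Real.rpow_nonneg hB _
  have hsA2 : ‖a‖ ^ (p - 2) * ‖a‖ ^ 2 = ‖a‖ ^ (p - 1) * ‖a‖ := by
    rw [pow_two, ← mul_assoc, hsA]
  have hsB2 : ‖b‖ ^ (p - 2) * ‖b‖ ^ 2 = ‖b‖ ^ (p - 1) * ‖b‖ := by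
    rw [pow_two, ← mul_assoc, hsB]
  have hsAB : ‖a‖ ^ (p - 2) * (‖a‖ * ‖b‖) = ‖a‖ ^ (p - 1) * ‖b‖ := by
    rw [← mul_assoc, hsA]
  have hrAB : ‖b‖ ^ (p - 2) * (‖a‖ * ‖b‖) = ‖b‖ ^ (p - 1) * ‖a‖ := by
    rw [mul_comm ‖a‖ ‖b‖, ← mul_assoc, hsB]
  nlinarith [mul_le_mul_of_nonneg_left ht h1, mul_le_mul_of_nonneg_left ht h2]

lemma rpow_diff_nonneg {p : ℝ} (hp : 1 < p) (a b : E2) :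
    0 ≤ (‖a‖ ^ (p - 1) - ‖b‖ ^ (p - 1)) * (‖a‖ - ‖b‖) := by
  rcases le_total ‖a‖ ‖b‖ with h | h
  · have := Real.rpow_le_rpow (norm_nonneg a) h (by linarith : (0:ℝ) ≤ p - 1)
    nlinarith
  · have := Real.rpow_le_rpow (norm_nonneg b) h (by linarith : (0:ℝ) ≤ p - 1)
    exact mul_nonneg (by linarith) (by linarith)

lemma key_nonneg {p : ℝ} (hp : 1 < p) (a b : E2) :
    0 ≤ ⟪(‖a‖ ^ (p - 2)) • a - (‖b‖ ^ (p - 2)) • b, a - b⟫ :=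
  le_trans (rpow_diff_nonneg hp a b) (key_lower hp a b)

lemma key_eq {p : ℝ} (hp : 1 < p) {a b : E2}
    (h : ⟪(‖a‖ ^ (p - 2)) • a - (‖b‖ ^ (p - 2)) • b, a - b⟫ = 0) : a = b := by
  by_contra hab
  rcases eq_or_ne ‖a‖ ‖b‖ with hAB | hAB
  · have hab' : ‖a - b‖ ≠ 0 := by
      simpa [sub_eq_zero] using hab
    have hA0 : ‖a‖ ≠ 0 := by
      intro h0
      apply hab
      have ha : a = 0 := norm_eq_zero.1 h0
      have hb : b = 0 := norm_eq_zero.1 (by rw [← hAB]; exact h0)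
      rw [ha, hb]
    have hpos : 0 < ‖a‖ ^ (p - 2) :=
      Real.rpow_pos_of_pos ((norm_nonneg a).lt_of_ne (Ne.symm hA0)) _
    rw [inner_expand] at h
    have hns : ‖a - b‖ ^ 2 = ‖a‖ ^ 2 - 2 * ⟪a, b⟫ + ‖b‖ ^ 2 := norm_sub_sq_real a b
    rw [← hAB] at h hns
    have hz : ‖a‖ ^ (p - 2) * ‖a - b‖ ^ 2 = 0 := by
      rw [hns]; linear_combination h
    exact (mul_ne_zero hpos.ne' (pow_ne_zero 2 hab')) hz
  · have hstrict : 0 < (‖a‖ ^ (p - 1) - ‖b‖ ^ (p - 1)) * (‖a‖ - ‖b‖) := by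
      rcases lt_or_gt_of_ne hAB with hlt | hlt
      · have := Real.rpow_lt_rpow (norm_nonneg a) hlt (by linarith : (0:ℝ) < p - 1)
        nlinarith
      · have := Real.rpow_lt_rpow (norm_nonneg b) hlt (by linarith : (0:ℝ) < p - 1)
        exact mul_pos (by linarith) (by linarith)
    have := key_lower hp a b
    linarith

lemma contF {p : ℝ} (hp : 1 < p) : Continuous (fun a : E2 => (‖a‖ ^ (p - 2)) • a) := by
  rw [continuous_iff_continuousAt]
  intro a
  rcases eq_or_ne a 0 with rfl | ha
  · have h0 : (‖(0:E2)‖ ^ (p - 2)) • (0:E2) = 0 := smul_zero _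
    rw [ContinuousAt, h0]
    have key : ∀ x : E2, ‖(‖x‖ ^ (p - 2)) • x‖ ≤ ‖x‖ ^ (p - 1) := by
      intro x
      rcases eq_or_ne x 0 with rfl | hx
      · simp [Real.zero_rpow (by intro h'; linarith : p - 1 ≠ 0)]
      · rw [norm_smul, Real.norm_eq_abs, abs_of_nonneg (Real.rpow_nonneg (norm_nonneg x) _),
          rpow_h1 hp (norm_nonneg x)]
    apply squeeze_zero_norm key
    have hn : Filter.Tendsto (fun x : E2 => ‖x‖) (nhds 0) (nhds 0) := by
      simpa using continuous_norm.tendsto (0:E2)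
    have hr : ContinuousAt (fun r : ℝ => r ^ (p - 1)) 0 :=
      Real.continuousAt_rpow_const 0 (p - 1) (Or.inr (by linarith))
    have := hr.tendsto.comp hn
    simpa [Function.comp_def, Real.zero_rpow (by intro h'; linarith : p - 1 ≠ 0)] using this
  · exact ((continuous_norm.continuousAt).rpow_const
      (Or.inl (norm_ne_zero_iff.2 ha))).smul continuousAt_id

lemma key_le (p : ℝ) (hp : 1 < p)
    (Ω : Set E2) (hΩb : Bornology.IsBounded Ω) (hΩo : IsOpen Ω)
    (u v : E2 → ℝ)
    (huc : ContinuousOn u (closure Ω)) (hup : PHarmonicOn p Ω u)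
    (hvc : ContinuousOn v (closure Ω)) (hvp : PHarmonicOn p Ω v) :
    ∀ x ∈ Ω, u x - v x ≤ sSup ((fun y => |u y - v y|) '' frontier Ω) := by
  set M := sSup ((fun y => |u y - v y|) '' frontier Ω) with hM
  have hwc : ContinuousOn (fun z => u z - v z) (closure Ω) := huc.sub hvc
  have hcl_cpt : IsCompact (closure Ω) := hΩb.isCompact_closure
  have hfr_cpt : IsCompact (frontier Ω) :=
    hcl_cpt.of_isClosed_subset isClosed_frontier frontier_subset_closure
  have hbdd : BddAbove ((fun y => |u y - v y|) '' frontier Ω) :=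
    (hfr_cpt.image_of_continuousOn ((hwc.mono frontier_subset_closure).abs)).bddAbove
  have hfrM : ∀ y ∈ frontier Ω, u y - v y ≤ M :=
    fun y hy => (le_abs_self _).trans (le_csSup hbdd ⟨y, hy, rfl⟩)
  intro x hx
  have main : ∀ ε : ℝ, 0 < ε → u x - v x ≤ M + ε := by
    intro ε hε
    set η : E2 → ℝ := Ω.indicator (fun z => Gc (u z - v z - (M + ε))) with hη
    -- support control
    set K : Set E2 := closure Ω ∩ (fun z => u z - v z) ⁻¹' (Ici (M + ε)) with hK
    have hKc : IsClosed K :=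
      hwc.preimage_isClosed_of_isClosed isClosed_closure isClosed_Ici
    have hKΩ : K ⊆ Ω := by
      rintro z ⟨hz1, hz2⟩
      rw [closure_eq_self_union_frontier] at hz1
      rcases hz1 with h | h
      · exact h
      · exfalso
        have h1 := hfrM z h
        have h2 : M + ε ≤ u z - v z := hz2
        linarith
    have hsupp : Function.support η ⊆ K := by
      intro z hz
      rw [Function.mem_support] at hz
      have hzΩ : z ∈ Ω := by
        by_contra hzn
        rw [hη] at hz
        exact hz (Set.indicator_of_notMem hzn _)
      have hne : Gc (u z - v z - (M + ε)) ≠ 0 := by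
        rw [hη] at hz
        rwa [Set.indicator_of_mem hzΩ] at hz
      refine ⟨subset_closure hzΩ, ?_⟩
      have h2 : ¬ (u z - v z - (M + ε) ≤ 0) := fun hle => hne (Gc_eq_zero_iff.2 hle)
      simp only [mem_preimage, mem_Ici]
      linarith
    have hts : tsupport η ⊆ K := closure_minimal hsupp hKc
    have hts2 : tsupport η ⊆ Ω := hts.trans hKΩ
    have hcmp : HasCompactSupport η :=
      hcl_cpt.of_isClosed_subset (isClosed_tsupport η) (hts.trans inter_subset_left)
    -- smoothness
    have hηev : ∀ y ∈ Ω, η =ᶠ[nhds y] fun z => Gc (u z - v z - (M + ε)) := by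
      intro y hy
      filter_upwards [hΩo.mem_nhds hy] with z hz
      rw [hη]
      exact Set.indicator_of_mem hz _
    have hηev0 : ∀ y ∉ Ω, η =ᶠ[nhds y] fun _ => (0:ℝ) := by
      intro y hy
      by_cases hy2 : y ∈ closure Ω
      · have hyf : y ∈ frontier Ω := ⟨hy2, by rwa [hΩo.interior_eq]⟩
        have hlt : u y - v y < M + ε := by
          have := hfrM y hyf; linarith
        have hmem : (fun z => u z - v z) ⁻¹' (Iio (M + ε)) ∈ nhdsWithin y (closure Ω) :=
          (hwc y hy2).preimage_mem_nhdsWithin (Iio_mem_nhds hlt)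
        rw [mem_nhdsWithin] at hmem
        obtain ⟨V, hVo, hyV, hVsub⟩ := hmem
        filter_upwards [hVo.mem_nhds hyV] with z hz
        by_cases hzΩ : z ∈ Ω
        · have hzlt : u z - v z < M + ε := hVsub ⟨hz, subset_closure hzΩ⟩
          rw [hη, Set.indicator_of_mem hzΩ]
          exact Gc_eq_zero_iff.2 (by linarith)
        · rw [hη]
          exact Set.indicator_of_notMem hzΩ _
      · filter_upwards [(isOpen_compl_iff.2 isClosed_closure).mem_nhds hy2] with z hz
        rw [hη]
        exact Set.indicator_of_notMem (fun h => hz (subset_closure h)) _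
    have hηC1 : ContDiff ℝ 1 η := by
      rw [contDiff_iff_contDiffAt]
      intro y
      by_cases hy : y ∈ Ω
      · have hcd : ContDiffAt ℝ 1 (fun z => Gc (u z - v z - (M + ε))) y := by
        -- Gc ∘ (u - v - c)
          have hu1 : ContDiffAt ℝ 1 u y := hup.1.contDiffAt (hΩo.mem_nhds hy)
          have hv1 : ContDiffAt ℝ 1 v y := hvp.1.contDiffAt (hΩo.mem_nhds hy)
          exact Gc_contDiff.contDiffAt.comp y ((hu1.sub hv1).sub contDiffAt_const)
        exact hcd.congr_of_eventuallyEq (hηev y hy)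
      · exact contDiffAt_const.congr_of_eventuallyEq (hηev0 y hy)
    -- gradient of η on Ω
    have hηgrad : ∀ y ∈ Ω, HasGradientAt η
        ((2 * max (u y - v y - (M + ε)) 0) • (gradient u y - gradient v y)) y := by
      intro y hy
      have hud : DifferentiableAt ℝ u y :=
        (hup.1.contDiffAt (hΩo.mem_nhds hy)).differentiableAt one_ne_zero
      have hvd : DifferentiableAt ℝ v y :=
        (hvp.1.contDiffAt (hΩo.mem_nhds hy)).differentiableAt one_ne_zero
      have hw : HasFDerivAt (fun z => u z - v z - (M + ε))
          (InnerProductSpace.toDual ℝ E2 (gradient u y)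
            - InnerProductSpace.toDual ℝ E2 (gradient v y)) y :=
        (hud.hasGradientAt.hasFDerivAt.sub hvd.hasGradientAt.hasFDerivAt).sub_const _
      have hG := Gc_hasDerivAt (u y - v y - (M + ε))
      have hcomp := hG.comp_hasFDerivAt y hw
      have hcomp' : HasFDerivAt η
          ((2 * max (u y - v y - (M + ε)) 0) •
            (InnerProductSpace.toDual ℝ E2 (gradient u y)
              - InnerProductSpace.toDual ℝ E2 (gradient v y))) y :=
        HasFDerivAt.congr_of_eventuallyEq hcomp (hηev y hy)
      have h2 := hcomp'.hasGradientAt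
      simpa [gradient, _root_.map_smul, _root_.map_sub, LinearIsometryEquiv.symm_apply_apply] using h2
    -- continuity of gradients
    have hgucont : ContinuousOn (fun z => gradient u z) Ω :=
      (InnerProductSpace.toDual ℝ E2).symm.continuous.comp_continuousOn
        (hup.1.continuousOn_fderiv_of_isOpen hΩo le_rfl)
    have hgvcont : ContinuousOn (fun z => gradient v z) Ω :=
      (InnerProductSpace.toDual ℝ E2).symm.continuous.comp_continuousOn
        (hvp.1.continuousOn_fderiv_of_isOpen hΩo le_rfl)
    have hgηcont : Continuous (fun z => gradient η z) :=
      (InnerProductSpace.toDual ℝ E2).symm.continuous.comp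
        (hηC1.continuous_fderiv one_ne_zero)
    set Fm : E2 → E2 := fun a => (‖a‖ ^ (p - 2)) • a with hFm
    have hFmc : Continuous Fm := contF hp
    set f1 : E2 → ℝ := fun z => ⟪Fm (gradient u z), gradient η z⟫ with hf1
    set f2 : E2 → ℝ := fun z => ⟪Fm (gradient v z), gradient η z⟫ with hf2
    have hf1c : ContinuousOn f1 Ω :=
      (hFmc.comp_continuousOn hgucont).inner hgηcont.continuousOn
    have hf2c : ContinuousOn f2 Ω :=
      (hFmc.comp_continuousOn hgvcont).inner hgηcont.continuousOn
    -- gradient of η vanishes off the support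
    have hgη0 : ∀ z ∉ tsupport η, gradient η z = 0 := by
      intro z hz
      have hfz : fderiv ℝ η z = 0 := by
        by_contra hne
        exact hz (support_fderiv_subset ℝ (Function.mem_support.2 hne))
      show (InnerProductSpace.toDual ℝ E2).symm (fderiv ℝ η z) = 0
      rw [hfz]
      simp
    have hzero_off1 : ∀ z ∉ tsupport η, f1 z = 0 := by
      intro z hz
      simp only [hf1]
      rw [hgη0 z hz]
      simp
    have hzero_off2 : ∀ z ∉ tsupport η, f2 z = 0 := by
      intro z hz
      simp only [hf2]
      rw [hgη0 z hz]
      simp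
    -- integrability
    have hdm : MeasurableSet (Ω \ tsupport η) :=
      hΩo.measurableSet.diff (isClosed_tsupport η).measurableSet
    have hcover : Ω ⊆ tsupport η ∪ (Ω \ tsupport η) := by
      intro z hz
      by_cases h : z ∈ tsupport η
      · exact Or.inl h
      · exact Or.inr ⟨hz, h⟩
    have hint1 : IntegrableOn f1 Ω := by
      have hK1 : IntegrableOn f1 (tsupport η) :=
        (hf1c.mono hts2).integrableOn_compact hcmp
      have hK2 : IntegrableOn f1 (Ω \ tsupport η) :=
        integrableOn_zero.congr_fun (fun z hz => (hzero_off1 z hz.2).symm) hdm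
      exact (hK1.union hK2).mono_set hcover
    have hint2 : IntegrableOn f2 Ω := by
      have hK1 : IntegrableOn f2 (tsupport η) :=
        (hf2c.mono hts2).integrableOn_compact hcmp
      have hK2 : IntegrableOn f2 (Ω \ tsupport η) :=
        integrableOn_zero.congr_fun (fun z hz => (hzero_off2 z hz.2).symm) hdm
      exact (hK1.union hK2).mono_set hcover
    -- the weak formulation
    have hIu : ∫ z in Ω, f1 z = 0 := by
      have heq : (fun z => ‖gradient u z‖ ^ (p - 2) * ⟪gradient u z, gradient η z⟫) = f1 := by
        funext z
        simp only [hf1, hFm]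
        exact (real_inner_smul_left _ _ _).symm
      have h0 := hup.2 η hηC1 hcmp hts2
      rwa [heq] at h0
    have hIv : ∫ z in Ω, f2 z = 0 := by
      have heq : (fun z => ‖gradient v z‖ ^ (p - 2) * ⟪gradient v z, gradient η z⟫) = f2 := by
        funext z
        simp only [hf2, hFm]
        exact (real_inner_smul_left _ _ _).symm
      have h0 := hvp.2 η hηC1 hcmp hts2
      rwa [heq] at h0
    have hIdiff : ∫ z in Ω, (f1 z - f2 z) = 0 := by
      rw [integral_sub hint1 hint2, hIu, hIv, sub_zero]
    -- pointwise formula and nonnegativity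
    have hpt : ∀ z ∈ Ω, f1 z - f2 z =
        (2 * max (u z - v z - (M + ε)) 0) *
          ⟪Fm (gradient u z) - Fm (gradient v z), gradient u z - gradient v z⟫ := by
      intro z hz
      have hγ : gradient η z =
          (2 * max (u z - v z - (M + ε)) 0) • (gradient u z - gradient v z) :=
        (hηgrad z hz).gradient
      simp only [hf1, hf2]
      rw [hγ]
      simp only [inner_sub_left, real_inner_smul_right]
      ring
    have hnn : ∀ z ∈ Ω, 0 ≤ f1 z - f2 z := by
      intro z hz
      rw [hpt z hz]
      refine mul_nonneg (by positivity) ?_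
      exact key_nonneg hp _ _
    -- integral zero of nonneg implies a.e. zero, then pointwise zero
    have hmeas : MeasurableSet Ω := hΩo.measurableSet
    have hae : (fun z => f1 z - f2 z) =ᵐ[volume.restrict Ω] 0 := by
      refine (setIntegral_eq_zero_iff_of_nonneg_ae ?_ (hint1.sub hint2)).1 hIdiff
      rw [Filter.EventuallyLE]
      refine (ae_restrict_iff' hmeas).2 (Filter.Eventually.of_forall ?_)
      intro z hz
      simpa using hnn z hz
    have hptzero : ∀ y ∈ Ω, f1 y - f2 y = 0 := by
      have heq := MeasureTheory.Measure.eqOn_of_ae_eq hae (hf1c.sub hf2c)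
        continuousOn_const (by rw [hΩo.interior_eq]; exact subset_closure)
      intro y hy
      simpa using heq hy
    -- gradient of η vanishes on Ω
    have hgrad0 : ∀ y ∈ Ω, gradient η y = 0 := by
      intro y hy
      have h := hptzero y hy
      rw [hpt y hy] at h
      rcases mul_eq_zero.1 h with h0 | h0
      · rw [(hηgrad y hy).gradient, h0, zero_smul]
      · have heq : gradient u y = gradient v y := key_eq hp h0
        rw [(hηgrad y hy).gradient, heq, sub_self, smul_zero]
    -- η has vanishing derivative everywhere
    have hfd0 : ∀ y, fderiv ℝ η y = 0 := by
      intro y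
      by_cases hy : y ∈ Ω
      · have h3 := ((hηC1.differentiable one_ne_zero) y).hasGradientAt
        rw [hgrad0 y hy] at h3
        have h4 : HasFDerivAt η (0 : E2 →L[ℝ] ℝ) y := by
          have h5 := h3.hasFDerivAt
          simpa using h5
        exact h4.fderiv
      · have hyt : y ∉ tsupport η := fun hyt => hy (hts2 hyt)
        by_contra hne
        exact hyt (support_fderiv_subset ℝ (Function.mem_support.2 hne))
    have hconst := is_const_of_fderiv_eq_zero (hηC1.differentiable one_ne_zero) hfd0
    obtain ⟨R, hR⟩ := hΩb.subset_closedBall 0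
    set x₀ : E2 := EuclideanSpace.single 0 (|R| + 1) with hx₀
    have hx₀n : x₀ ∉ Ω := by
      intro hmem
      have h1 := hR hmem
      rw [Metric.mem_closedBall, dist_zero_right] at h1
      have h2 : ‖x₀‖ = |R| + 1 := by
        rw [hx₀, EuclideanSpace.norm_single, Real.norm_eq_abs,
          abs_of_nonneg (by positivity : (0:ℝ) ≤ |R| + 1)]
      rw [h2] at h1
      have := le_abs_self R
      linarith
    have hηx : η x = 0 := by
      rw [hconst x x₀, hη]
      exact Set.indicator_of_notMem hx₀n _
    have hG0 : Gc (u x - v x - (M + ε)) = 0 := by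
      rw [hη, Set.indicator_of_mem hx] at hηx
      exact hηx
    have := Gc_eq_zero_iff.1 hG0
    linarith
  by_contra hcon
  push_neg at hcon
  have := main ((u x - v x - M) / 2) (by linarith)
  linarith

/-- Comparison principle for `p`-harmonic functions: the difference of two
`p`-harmonic functions continuous up to the boundary of a bounded plane domain is
controlled by its values on the frontier. -/
theorem pharmonic_comparison_principle
    (p : ℝ) (hp : 1 < p)
    (Ω : Set (EuclideanSpace ℝ (Fin 2))) (hΩne : Ω.Nonempty)
    (hΩb : Bornology.IsBounded Ω) (hΩo : IsOpen Ω)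
    (u v : EuclideanSpace ℝ (Fin 2) → ℝ)
    (huc : ContinuousOn u (closure Ω)) (hup : PHarmonicOn p Ω u)
    (hvc : ContinuousOn v (closure Ω)) (hvp : PHarmonicOn p Ω v) :
    ∀ x ∈ closure Ω,
      |u x - v x| ≤ sSup ((fun y => |u y - v y|) '' frontier Ω) := by
  have hwc : ContinuousOn (fun z => u z - v z) (closure Ω) := huc.sub hvc
  have hcl_cpt : IsCompact (closure Ω) := hΩb.isCompact_closure
  have hfr_cpt : IsCompact (frontier Ω) :=
    hcl_cpt.of_isClosed_subset isClosed_frontier frontier_subset_closure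
  have hbdd : BddAbove ((fun y => |u y - v y|) '' frontier Ω) :=
    (hfr_cpt.image_of_continuousOn ((hwc.mono frontier_subset_closure).abs)).bddAbove
  intro x hx
  rw [closure_eq_self_union_frontier] at hx
  rcases hx with hxΩ | hxf
  · have h1 := key_le p hp Ω hΩb hΩo u v huc hup hvc hvp x hxΩ
    have h2 := key_le p hp Ω hΩb hΩo v u hvc hvp huc hup x hxΩ
    have himg : (fun y => |v y - u y|) = (fun y => |u y - v y|) :=
      funext fun y => abs_sub_comm _ _
    rw [himg] at h2
    rw [abs_sub_le_iff]
    exact ⟨h1, h2⟩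
  · exact le_csSup hbdd ⟨x, hxf, rfl⟩

end PHarmonicAux
end
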